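/- There exist absolute constants c₁, c₂, C > 0 such that the following holds. Let X be a finite data domain and A : X^n → T an (ε,δ)-differentially private algorithm, and let X ~ P^n for a distribution P over X. If ε ∈ (0, 1/2], ε ≥ c₁/√n, and δ ≤ c₂·ε/n², then the mutual information satisfies I(X; A(X)) ≤ C·( n·ε² + n·√(δ/ε)·( 1 + ln( (1/n)·√(ε/δ) ) + n·log₂|X| ) ). -/

import Mathlib

open scoped ENNReal

/-- The probability that a sample from the probability mass function `μ` lands in `S`. -/
noncomputable def prob {α : Type*} (μ : PMF α) (S : Set α) : ℝ :=
  (μ.toOuterMeasure S).toReal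

/-- The independent coupling of two distributions: a pair whose components are independent
with the given marginal distributions. -/
noncomputable def indepPair {α β : Type*} (p : PMF α) (q : PMF β) : PMF (α × β) :=
  p.bind fun a => q.map fun b => (a, b)

/-- `MaxInfoLe μ b k` : the `b`-approximate max-information of the joint distribution `μ`
is at most `k` (measured in bits):  for every event `O` with `Pr[(X,Z) ∈ O] > b`,
`Pr[(X,Z) ∈ O] - b ≤ 2^k · Pr[X ⊗ Z ∈ O]`. -/
def MaxInfoLe {α β : Type*} (μ : PMF (α × β)) (b k : ℝ) : Prop :=
  ∀ O : Set (α × β), b < prob μ O →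
    prob μ O - b ≤ 2 ^ k * prob (indepPair (μ.map Prod.fst) (μ.map Prod.snd)) O

/-- The `n`-fold product (i.i.d.) distribution `P^n` on datasets of size `n`. -/
noncomputable def iidPMF {X : Type*} (P : PMF X) : (n : ℕ) → PMF (Fin n → X)
  | 0 => PMF.pure (fun i => i.elim0)
  | n + 1 => P.bind fun a => (iidPMF P n).map fun x => Fin.cons a x

/-- The joint distribution of `(X, A(X))` where `X ∼ μ` and `A` is a randomized algorithm. -/
noncomputable def jointPMF {D Y : Type*} (μ : PMF D) (A : D → PMF Y) : PMF (D × Y) :=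
  μ.bind fun x => (A x).map fun y => (x, y)
/-- Two datasets are neighboring if they differ in at most one entry. -/
def Neighbor {X : Type*} {n : ℕ} (x x' : Fin n → X) : Prop :=
  ∃ i : Fin n, ∀ j : Fin n, j ≠ i → x j = x' j

/-- `(ε,δ)`-differential privacy of a randomized algorithm `A` on datasets of size `n`. -/
def DiffPrivate {X Y : Type*} {n : ℕ} (A : (Fin n → X) → PMF Y) (ε δ : ℝ) : Prop :=
  ∀ x x' : Fin n → X, Neighbor x x' → ∀ O : Set Y,
    prob (A x) O ≤ Real.exp ε * prob (A x') O + δ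

/-- The mutual information, measured in nats, between the two components of a joint
distribution `μ`. -/
noncomputable def mutualInfoNats {α β : Type*} (μ : PMF (α × β)) : ℝ :=
  ∑' q : α × β, (μ q).toReal *
    Real.log ((μ q).toReal / (((μ.map Prod.fst) q.1).toReal * ((μ.map Prod.snd) q.2).toReal))

/-!
Peel off one coordinate of `X ∼ P^n` at a time. By the compensation identity, the first
coordinate contributes the average over the other coordinates `r` of
`∑ a, P a · D(A(a, r) ‖ ∑ b, P b · A(b, r))`, and what is left is the mutual information of
the mechanism `r ↦ ∑ a, P a · A(a, r)` on `n - 1` coordinates, which is still `(ε, δ)`-private.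

Each of these divergences is between `(ε, δ)`-indistinguishable distributions `μ, ν` with
`ν ≥ w μ` for `w = P a`, and such a divergence is at most `32 ε² + 2 δ + (2 δ / ε) log w⁻¹`:
where `μ ≤ e^{2ε} ν` the log-ratio is of second order, and the rest has `μ`-mass
`O(δ / ε)` and log-ratio at most `log w⁻¹`. Averaged over `a`, `log (P a)⁻¹` becomes the
entropy of `P`, at most `log |X|`. So `I(X; A(X)) ≤ n (32 ε² + 2 δ + (2 δ / ε) log |X|)`, which
is below the stated bound with `c₁ = c₂ = 1` and `C = 32` once `δ ≤ ε / n²`.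
-/

open Real

namespace PMF

variable {α β γ T : Type*}

lemma toReal_apply_le_one (μ : PMF T) (y : T) : (μ y).toReal ≤ 1 :=
  ENNReal.toReal_le_of_le_ofReal zero_le_one (by simpa using μ.coe_le_one y)

lemma summable_toReal (μ : PMF T) : Summable fun y => (μ y).toReal :=
  ENNReal.summable_toReal (by simp)

lemma tsum_toReal (μ : PMF T) : ∑' y, (μ y).toReal = 1 := by
  rw [← ENNReal.tsum_toReal_eq μ.apply_ne_top, μ.tsum_coe, ENNReal.toReal_one]

lemma sum_toReal [Fintype α] (μ : PMF α) : ∑ a, (μ a).toReal = 1 := by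
  rw [← tsum_fintype (L := .unconditional α), tsum_toReal]

lemma toReal_bind_apply [Fintype α] (P : PMF α) (ν : α → PMF T) (y : T) :
    (P.bind ν y).toReal = ∑ a, (P a).toReal * (ν a y).toReal := by
  rw [bind_apply, tsum_fintype, ENNReal.toReal_sum fun a _ =>
    ENNReal.mul_ne_top (P.apply_ne_top a) ((ν a).apply_ne_top y)]
  simp only [ENNReal.toReal_mul]

lemma mul_toReal_le_toReal_bind (P : PMF α) (ν : α → PMF T) (a : α) (y : T) :
    (P a).toReal * (ν a y).toReal ≤ (P.bind ν y).toReal := by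
  rw [← ENNReal.toReal_mul]
  exact ENNReal.toReal_mono ((P.bind ν).apply_ne_top y)
    (by rw [bind_apply]; exact ENNReal.le_tsum (f := fun a => P a * ν a y) a)

lemma bind_map_apply_of_injective2 (μ : PMF α) (ν : α → PMF β) {f : α → β → γ}
    (hf : Function.Injective2 f) (a : α) (b : β) :
    (μ.bind fun a => (ν a).map (f a)) (f a b) = μ a * ν a b := by
  have hmap : ∀ a', a' ≠ a → (ν a').map (f a') (f a b) = 0 := fun a' ha' => by
    rw [map_apply]
    exact ENNReal.tsum_eq_zero.2 fun b' => if_neg fun h => ha' (hf h).1.symm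
  rw [bind_apply, tsum_eq_single a fun a' ha' => by rw [hmap a' ha', mul_zero], map_apply,
    tsum_eq_single b fun b' hb' => if_neg fun h => hb' (hf h).2.symm, if_pos rfl]

lemma toOuterMeasure_apply_ne_top (μ : PMF T) (S : Set T) : μ.toOuterMeasure S ≠ ∞ :=
  ne_top_of_le_ne_top ENNReal.one_ne_top <| (μ.toOuterMeasure.mono (Set.subset_univ S)).trans_eq
    ((μ.toOuterMeasure_apply_eq_one_iff _).2 (Set.subset_univ _))

end PMF

section Prob

variable {α T : Type*}

lemma prob_eq_tsum_indicator (μ : PMF T) (S : Set T) :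
    prob μ S = ∑' y, S.indicator (fun y => (μ y).toReal) y := by
  rw [prob, PMF.toOuterMeasure_apply, ENNReal.tsum_toReal_eq fun y =>
    (Set.indicator_le_self S μ y).trans_lt (μ.apply_ne_top y).lt_top |>.ne]
  congr 1
  ext y
  by_cases hy : y ∈ S <;> simp [hy]

lemma prob_bind [Fintype α] (P : PMF α) (ν : α → PMF T) (S : Set T) :
    prob (P.bind ν) S = ∑ a, (P a).toReal * prob (ν a) S := by
  rw [prob, PMF.toOuterMeasure_bind_apply, tsum_fintype, ENNReal.toReal_sum fun a _ =>
    ENNReal.mul_ne_top (P.apply_ne_top a) (PMF.toOuterMeasure_apply_ne_top _ _)]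
  simp only [ENNReal.toReal_mul, prob]

/-- One-sided `(ε, δ)`-indistinguishability: `DiffPrivate A ε δ` says exactly that
`ExpDominated ε δ (A x) (A x')` for all neighbouring `x, x'`. -/
def ExpDominated (ε δ : ℝ) (μ ν : PMF T) : Prop :=
  ∀ O : Set T, prob μ O ≤ Real.exp ε * prob ν O + δ

lemma ExpDominated.bind [Fintype α] {ε δ : ℝ} (P : PMF α) {ν ν' : α → PMF T}
    (h : ∀ a, ExpDominated ε δ (ν a) (ν' a)) : ExpDominated ε δ (P.bind ν) (P.bind ν') := by
  intro O
  rw [prob_bind, prob_bind]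
  calc ∑ a, (P a).toReal * prob (ν a) O
      ≤ ∑ a, (P a).toReal * (Real.exp ε * prob (ν' a) O + δ) :=
        Finset.sum_le_sum fun a _ => mul_le_mul_of_nonneg_left (h a O) ENNReal.toReal_nonneg
    _ = Real.exp ε * ∑ a, (P a).toReal * prob (ν' a) O + (∑ a, (P a).toReal) * δ := by
        rw [Finset.mul_sum, Finset.sum_mul, ← Finset.sum_add_distrib]
        exact Finset.sum_congr rfl fun a _ => by ring
    _ = Real.exp ε * ∑ a, (P a).toReal * prob (ν' a) O + δ := by rw [P.sum_toReal, one_mul]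

lemma ExpDominated.tsum_max_sub_le {ε δ : ℝ} {μ ν : PMF T} (h : ExpDominated ε δ μ ν) :
    ∑' y, max ((μ y).toReal - Real.exp ε * (ν y).toReal) 0 ≤ δ := by
  set O : Set T := {y | Real.exp ε * (ν y).toReal < (μ y).toReal}
  have hO : ∀ y, max ((μ y).toReal - Real.exp ε * (ν y).toReal) 0 =
      O.indicator (fun y => (μ y).toReal) y -
        Real.exp ε * O.indicator (fun y => (ν y).toReal) y := by
    intro y
    by_cases hy : y ∈ O
    · have hy' : Real.exp ε * (ν y).toReal < (μ y).toReal := hy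
      simp [Set.indicator_of_mem hy, hy'.le]
    · have hy' : ¬Real.exp ε * (ν y).toReal < (μ y).toReal := hy
      simp [Set.indicator_of_notMem hy, not_lt.1 hy']
  have hμ := μ.summable_toReal.indicator O
  have hν := ν.summable_toReal.indicator O
  rw [tsum_congr hO, hμ.tsum_sub (hν.mul_left _), tsum_mul_left, ← prob_eq_tsum_indicator,
    ← prob_eq_tsum_indicator]
  linarith [h O]

end Prob

section Scalar

lemma exp_le_one_add_two_mul {x : ℝ} (h0 : 0 ≤ x) (h1 : x ≤ 1) : exp x ≤ 1 + 2 * x := by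
  have := abs_exp_sub_one_le (x := x) (by rwa [abs_of_nonneg h0])
  rw [abs_of_nonneg h0] at this
  linarith [le_abs_self (exp x - 1)]

lemma mul_log_div_le_mul_log_inv {p q w : ℝ} (hp : 0 ≤ p) (hw : 0 < w) (h : w * p ≤ q) :
    p * log (p / q) ≤ p * log w⁻¹ := by
  rcases hp.eq_or_lt with rfl | hp
  · simp
  have hq : 0 < q := (mul_pos hw hp).trans_le h
  refine mul_le_mul_of_nonneg_left (log_le_log (div_pos hp hq) ?_) hp.le
  rw [div_le_iff₀ hq, ← div_eq_inv_mul, le_div_iff₀ hw]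
  linarith

lemma sub_le_mul_log_div {p q : ℝ} (hp : 0 ≤ p) (hq : 0 ≤ q) (hpq : 0 < p → 0 < q) :
    p - q ≤ p * log (p / q) := by
  rcases hp.eq_or_lt with rfl | hp
  · simpa using hq
  have h := mul_le_mul_of_nonneg_left (one_sub_inv_le_log_of_pos (div_pos hp (hpq hp))) hp.le
  rwa [inv_div, mul_sub, mul_one, mul_div_cancel₀ _ hp.ne'] at h

/-- From `p log (p / q) ≤ p - q + (p - q)² / q` and `|p - q| ≤ 4 ε q + (q - e^ε p)⁺`. -/
lemma mul_log_div_le_of_le_exp {p q ε : ℝ} (hp : 0 ≤ p) (hq : 0 ≤ q) (hε : 0 ≤ ε)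
    (hε2 : ε ≤ 1 / 2) (h : p ≤ exp (2 * ε) * q) :
    p * log (p / q) ≤ p - q + 32 * ε ^ 2 * q + 2 * max (q - exp ε * p) 0 := by
  rcases hp.eq_or_lt with rfl | hp
  · simp only [zero_mul, sub_zero, mul_zero, zero_sub, max_eq_left hq]
    nlinarith [sq_nonneg ε]
  have hq : 0 < q := (mul_pos_iff_of_pos_left (exp_pos _)).1 (hp.trans_le h)
  set m := max (q - exp ε * p) 0
  have hm : q - exp ε * p ≤ m := le_max_left _ _
  have hm0 : 0 ≤ m := le_max_right _ _
  have hmq : m ≤ q := max_le (by nlinarith [exp_pos ε]) hq.le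
  have he1 := exp_le_one_add_two_mul hε (by linarith)
  have he2 := exp_le_one_add_two_mul (by linarith : 0 ≤ 2 * ε) (by linarith)
  have habs : |p - q| ≤ 4 * ε * q + m := by
    rw [abs_le]
    constructor
    · rcases le_total p q with hpq | hpq <;> nlinarith
    · nlinarith
  have hsq : (p - q) ^ 2 ≤ (32 * ε ^ 2 * q + 2 * m) * q := by
    nlinarith [sq_abs (p - q), abs_nonneg (p - q), sq_nonneg (4 * ε * q - m)]
  calc p * log (p / q) ≤ p * (p / q - 1) :=
        mul_le_mul_of_nonneg_left (log_le_sub_one_of_pos (div_pos hp hq)) hp.le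
    _ = p - q + (p - q) ^ 2 / q := by field_simp; ring
    _ ≤ p - q + (32 * ε ^ 2 * q + 2 * m) := by gcongr; rwa [div_le_iff₀ hq]
    _ = p - q + 32 * ε ^ 2 * q + 2 * m := by ring

lemma le_div_mul_max_sub_of_exp_lt {p q ε : ℝ} (hq : 0 ≤ q) (hε : 0 < ε) (hε2 : ε ≤ 1 / 2)
    (h : exp (2 * ε) * q < p) : p ≤ 2 / ε * max (p - exp ε * q) 0 := by
  have hp : 0 ≤ p := (mul_nonneg (exp_pos _).le hq).trans h.le
  have he1 := exp_le_one_add_two_mul hε.le (by linarith)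
  have hgap : 0 ≤ p - exp ε * q := by
    nlinarith [mul_le_mul_of_nonneg_right (exp_le_exp.2 (by linarith : ε ≤ 2 * ε)) hq]
  have hlow : ε * p ≤ exp ε * (p - exp ε * q) := by
    have hexp : exp ε * (p - exp ε * q) = exp ε * p - exp (2 * ε) * q := by
      rw [two_mul, exp_add]; ring
    nlinarith [mul_le_mul_of_nonneg_right (add_one_le_exp ε) hp]
  have key : ε * p ≤ 2 * (p - exp ε * q) :=
    hlow.trans (mul_le_mul_of_nonneg_right (by linarith) hgap)
  calc p = 2 / ε * (ε * p / 2) := by field_simp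
    _ ≤ 2 / ε * max (p - exp ε * q) 0 := by gcongr; exact le_max_of_le_left (by linarith)

lemma mul_log_div_le_of_mul_le {p q w ε : ℝ} (hp : 0 ≤ p) (hq : 0 ≤ q) (hε : 0 < ε)
    (hε2 : ε ≤ 1 / 2) (hw : 0 < w) (hw1 : w ≤ 1) (h : w * p ≤ q) :
    p * log (p / q) ≤ p - q + 32 * ε ^ 2 * q + 2 * max (q - exp ε * p) 0 +
      2 / ε * max (p - exp ε * q) 0 * log w⁻¹ := by
  have hL : 0 ≤ log w⁻¹ := log_nonneg ((one_le_inv₀ hw).2 hw1)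
  have hmax : ∀ x : ℝ, 0 ≤ max x 0 := fun x => le_max_right x 0
  rcases le_or_gt p (exp (2 * ε) * q) with hpq | hpq
  · have := mul_log_div_le_of_le_exp hp hq hε.le hε2 hpq
    have : 0 ≤ 2 / ε * max (p - exp ε * q) 0 * log w⁻¹ := by
      have := hmax (p - exp ε * q)
      positivity
    linarith
  · have hqp : q ≤ p := le_trans (le_mul_of_one_le_left hq (one_le_exp (by linarith))) hpq.le
    have := mul_le_mul_of_nonneg_right (le_div_mul_max_sub_of_exp_lt hq hε hε2 hpq) hL
    nlinarith [mul_log_div_le_mul_log_inv hp hw h, hmax (q - exp ε * p)]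

end Scalar

section KL

variable {α T : Type*}

noncomputable def klNats (μ ν : PMF T) : ℝ :=
  ∑' y, (μ y).toReal * log ((μ y).toReal / (ν y).toReal)

lemma klNats_self (μ : PMF T) : klNats μ μ = 0 := by
  refine (tsum_congr fun y => ?_).trans tsum_zero
  by_cases h : (μ y).toReal = 0 <;> simp [h]

lemma summable_mul_log_div {μ ν : PMF T} {w : ℝ} (hw : 0 < w)
    (h : ∀ y, w * (μ y).toReal ≤ (ν y).toReal) :
    Summable fun y => (μ y).toReal * log ((μ y).toReal / (ν y).toReal) := by
  refine .of_norm_bounded ((μ.summable_toReal.mul_left |log w⁻¹|).add ν.summable_toReal)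
    fun y => ?_
  have hμ : 0 ≤ (μ y).toReal := ENNReal.toReal_nonneg
  have hν : 0 ≤ (ν y).toReal := ENNReal.toReal_nonneg
  have hlow := sub_le_mul_log_div hμ hν fun hp => (mul_pos hw hp).trans_le (h y)
  have hup := mul_log_div_le_mul_log_inv hμ hw (h y)
  have habs := mul_le_mul_of_nonneg_left (le_abs_self (log w⁻¹)) hμ
  rw [Real.norm_eq_abs, abs_le]
  constructor <;> nlinarith [abs_nonneg (log w⁻¹)]

lemma summable_max_sub_exp_mul (μ ν : PMF T) (ε : ℝ) :
    Summable fun y => max ((μ y).toReal - exp ε * (ν y).toReal) 0 :=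
  μ.summable_toReal.of_nonneg_of_le (fun _ => le_max_right _ _) fun y =>
    max_le (sub_le_self _ (by positivity)) ENNReal.toReal_nonneg

theorem klNats_le_of_expDominated {ε δ w : ℝ} {μ ν : PMF T} (hε : 0 < ε) (hε2 : ε ≤ 1 / 2)
    (hw : 0 < w) (hw1 : w ≤ 1) (hwμν : ∀ y, w * (μ y).toReal ≤ (ν y).toReal)
    (hμν : ExpDominated ε δ μ ν) (hνμ : ExpDominated ε δ ν μ) :
    klNats μ ν ≤ 32 * ε ^ 2 + 2 * δ + 2 / ε * δ * log w⁻¹ := by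
  have hL : 0 ≤ log w⁻¹ := log_nonneg ((one_le_inv₀ hw).2 hw1)
  -- sum the pointwise bound `mul_log_div_le_of_mul_le`; both positive parts sum to at most `δ`
  have hbound := (((μ.summable_toReal.hasSum.sub ν.summable_toReal.hasSum).add
    (ν.summable_toReal.hasSum.mul_left (32 * ε ^ 2))).add
    ((summable_max_sub_exp_mul ν μ ε).hasSum.mul_left 2)).add
    (((summable_max_sub_exp_mul μ ν ε).hasSum.mul_left (2 / ε)).mul_right (log w⁻¹))
  have hle := hasSum_le (fun y => mul_log_div_le_of_mul_le ENNReal.toReal_nonneg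
    ENNReal.toReal_nonneg hε hε2 hw hw1 (hwμν y)) (summable_mul_log_div hw hwμν).hasSum hbound
  rw [μ.tsum_toReal, ν.tsum_toReal] at hle
  have := hμν.tsum_max_sub_le
  have := hνμ.tsum_max_sub_le
  calc klNats μ ν ≤ _ := hle
    _ ≤ 32 * ε ^ 2 + 2 * δ + 2 / ε * δ * log w⁻¹ := by gcongr; linarith

end KL

section Mixture

variable {α T : Type*} [Fintype α]

lemma sum_negMulLog_le_log_card {w : α → ℝ} (h0 : ∀ a, 0 ≤ w a) (h1 : ∑ a, w a = 1) :
    ∑ a, negMulLog (w a) ≤ log (Fintype.card α) := by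
  have hN : (0 : ℝ) < Fintype.card α := by
    rcases isEmpty_or_nonempty α with hα | hα
    · simp at h1
    · exact_mod_cast Fintype.card_pos
  have hJensen := concaveOn_negMulLog.le_map_sum (t := Finset.univ)
    (w := fun _ => (Fintype.card α : ℝ)⁻¹) (p := w) (fun _ _ => by positivity)
    (by simp [Finset.card_univ, hN.ne']) fun a _ => Set.mem_Ici.2 (h0 a)
  simp only [smul_eq_mul, ← Finset.mul_sum, h1, mul_one, negMulLog, log_inv] at hJensen
  have := mul_le_mul_of_nonneg_left hJensen hN.le
  simpa [negMulLog, ← mul_assoc, mul_inv_cancel₀ hN.ne'] using this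

theorem sum_mul_klNats_bind_le {ε δ : ℝ} (P : PMF α) (ν : α → PMF T) (hε : 0 < ε)
    (hε2 : ε ≤ 1 / 2) (hδ : 0 ≤ δ) (hν : ∀ a b, ExpDominated ε δ (ν a) (ν b)) :
    ∑ a, (P a).toReal * klNats (ν a) (P.bind ν) ≤
      32 * ε ^ 2 + 2 * δ + 2 / ε * δ * log (Fintype.card α) := by
  have hterm : ∀ a, (P a).toReal * klNats (ν a) (P.bind ν) ≤
      (P a).toReal * (32 * ε ^ 2 + 2 * δ) + 2 / ε * δ * negMulLog (P a).toReal := by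
    intro a
    rcases (ENNReal.toReal_nonneg (a := P a)).eq_or_lt with h | h
    · simp [← h]
    -- `ν a` is compared with the mixture as a mixture of its comparisons with each `ν b`
    have hkl := klNats_le_of_expDominated hε hε2 h (P.toReal_apply_le_one a)
      (P.mul_toReal_le_toReal_bind ν a)
      (by simpa only [P.bind_const] using ExpDominated.bind P fun b => hν a b)
      (by simpa only [P.bind_const] using ExpDominated.bind P fun b => hν b a)
    have := mul_le_mul_of_nonneg_left hkl h.le
    simp only [negMulLog, log_inv] at this ⊢
    linarith
  calc ∑ a, (P a).toReal * klNats (ν a) (P.bind ν)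
      ≤ ∑ a, ((P a).toReal * (32 * ε ^ 2 + 2 * δ) + 2 / ε * δ * negMulLog (P a).toReal) :=
        Finset.sum_le_sum fun a _ => hterm a
    _ = 32 * ε ^ 2 + 2 * δ + 2 / ε * δ * ∑ a, negMulLog (P a).toReal := by
        rw [Finset.sum_add_distrib, ← Finset.sum_mul, P.sum_toReal, one_mul, Finset.mul_sum]
    _ ≤ 32 * ε ^ 2 + 2 * δ + 2 / ε * δ * log (Fintype.card α) := by
        gcongr
        exact sum_negMulLog_le_log_card (fun _ => ENNReal.toReal_nonneg) P.sum_toReal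

end Mixture

section Compensation

variable {α T : Type*}

lemma mul_mul_log_div_eq_add {a p m r : ℝ} (ha : 0 ≤ a) (hp : 0 ≤ p)
    (hm : 0 < a * p → 0 < m) (hr : 0 < a * p → 0 < r) :
    a * (p * log (p / r)) = a * (p * log (p / m)) + a * p * log (m / r) := by
  rcases (mul_nonneg ha hp).eq_or_lt with h | h
  · rcases mul_eq_zero.1 h.symm with h | h <;> simp [h]
  have hp' : 0 < p := pos_of_mul_pos_right h ha
  rw [log_div hp'.ne' (hr h).ne', log_div hp'.ne' (hm h).ne', log_div (hm h).ne' (hr h).ne']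
  ring

lemma summable_mul_mul_log_div (P : PMF α) (ν : α → PMF T) {ρ : PMF T} {w : ℝ} (hw : 0 < w)
    (hρ : ∀ y, w * (P.bind ν y).toReal ≤ (ρ y).toReal) (a : α) :
    Summable fun y => (P a).toReal * ((ν a y).toReal * log ((ν a y).toReal / (ρ y).toReal)) := by
  rcases (ENNReal.toReal_nonneg (a := P a)).eq_or_lt with h | h
  · simp [← h]
  refine (summable_mul_log_div (mul_pos hw h) fun y => ?_).mul_left _
  rw [mul_assoc]
  exact (mul_le_mul_of_nonneg_left (P.mul_toReal_le_toReal_bind ν a y) hw.le).trans (hρ y)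

variable [Fintype α]

/-- The compensation identity of information theory. -/
theorem sum_mul_klNats_eq_add (P : PMF α) (ν : α → PMF T) (ρ : PMF T) {w : ℝ} (hw : 0 < w)
    (hρ : ∀ y, w * (P.bind ν y).toReal ≤ (ρ y).toReal) :
    ∑ a, (P a).toReal * klNats (ν a) ρ =
      ∑ a, (P a).toReal * klNats (ν a) (P.bind ν) + klNats (P.bind ν) ρ := by
  set M := P.bind ν
  have hpoint : ∀ y,
      ∑ a, (P a).toReal * ((ν a y).toReal * log ((ν a y).toReal / (ρ y).toReal)) =
        ∑ a, (P a).toReal * ((ν a y).toReal * log ((ν a y).toReal / (M y).toReal)) +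
          (M y).toReal * log ((M y).toReal / (ρ y).toReal) := by
    intro y
    have hM : (M y).toReal = ∑ a, (P a).toReal * (ν a y).toReal := P.toReal_bind_apply ν y
    have hMpos : ∀ a, 0 < (P a).toReal * (ν a y).toReal → 0 < (M y).toReal :=
      fun a h => h.trans_le (P.mul_toReal_le_toReal_bind ν a y)
    rw [Finset.sum_congr rfl fun a _ => mul_mul_log_div_eq_add ENNReal.toReal_nonneg
      ENNReal.toReal_nonneg (hMpos a) fun h => (mul_pos hw (hMpos a h)).trans_le (hρ y),
      Finset.sum_add_distrib, ← Finset.sum_mul, ← hM]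
  have hsumM := summable_mul_mul_log_div P ν one_pos fun y => (one_mul _).le
  calc ∑ a, (P a).toReal * klNats (ν a) ρ
      = ∑' y, ∑ a, (P a).toReal * ((ν a y).toReal * log ((ν a y).toReal / (ρ y).toReal)) := by
        simp only [klNats, ← tsum_mul_left]
        exact (Summable.tsum_finsetSum fun a _ => summable_mul_mul_log_div P ν hw hρ a).symm
    _ = _ := by
        rw [tsum_congr hpoint, Summable.tsum_add (summable_sum fun a _ => hsumM a)
          (summable_mul_log_div hw hρ), Summable.tsum_finsetSum fun a _ => hsumM a]
        simp only [klNats, tsum_mul_left]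
        rfl

end Compensation

section MutualInfo

variable {α T : Type*}

lemma tsum_prod_eq_sum_tsum [Fintype α] {f : α × T → ℝ} (h : ∀ x, Summable fun y => f (x, y)) :
    ∑' q, f q = ∑ x, ∑' y, f (x, y) := by
  have hf : Summable f := .of_abs <|
    (summable_prod_of_nonneg fun _ => abs_nonneg _).2 ⟨fun x => (h x).abs, .of_finite⟩
  rw [hf.tsum_prod' h, tsum_fintype]

lemma jointPMF_apply (μ : PMF α) (A : α → PMF T) (x : α) (y : T) :
    jointPMF μ A (x, y) = μ x * A x y :=
  μ.bind_map_apply_of_injective2 A (fun _ _ _ _ h => Prod.mk.inj h) x y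

lemma jointPMF_map_fst (μ : PMF α) (A : α → PMF T) : (jointPMF μ A).map Prod.fst = μ := by
  simp only [jointPMF, PMF.map_bind, PMF.map_comp]
  exact (congrArg μ.bind (funext fun a => PMF.map_const (A a) a)).trans μ.bind_pure

lemma jointPMF_map_snd (μ : PMF α) (A : α → PMF T) :
    (jointPMF μ A).map Prod.snd = μ.bind A := by
  simp only [jointPMF, PMF.map_bind, PMF.map_comp]
  exact congrArg μ.bind (funext fun a => (A a).map_id)

theorem mutualInfoNats_jointPMF [Fintype α] (μ : PMF α) (A : α → PMF T) :
    mutualInfoNats (jointPMF μ A) = ∑ x, (μ x).toReal * klNats (A x) (μ.bind A) := by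
  have hterm : ∀ q : α × T, (jointPMF μ A q).toReal * log ((jointPMF μ A q).toReal /
      ((μ q.1).toReal * (μ.bind A q.2).toReal)) =
      (μ q.1).toReal * ((A q.1 q.2).toReal * log ((A q.1 q.2).toReal / (μ.bind A q.2).toReal)) := by
    rintro ⟨x, y⟩
    rw [jointPMF_apply, ENNReal.toReal_mul]
    rcases (ENNReal.toReal_nonneg (a := μ x)).eq_or_lt with h | h
    · simp [← h]
    rw [mul_div_mul_left _ _ h.ne', mul_assoc]
  rw [mutualInfoNats, jointPMF_map_fst, jointPMF_map_snd]
  refine (tsum_congr hterm).trans <| (tsum_prod_eq_sum_tsum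
    (summable_mul_mul_log_div μ A one_pos fun y => (one_mul _).le)).trans ?_
  simp only [klNats, tsum_mul_left]

end MutualInfo

section IID

variable {X T : Type*}

lemma iidPMF_succ_apply (P : PMF X) (n : ℕ) (a : X) (r : Fin n → X) :
    iidPMF P (n + 1) (Fin.cons a r) = P a * iidPMF P n r :=
  P.bind_map_apply_of_injective2 (fun _ => iidPMF P n)
    (Fin.cons_injective2 (α := fun _ => X)) a r

lemma iidPMF_succ_bind (P : PMF X) (n : ℕ) (A : (Fin (n + 1) → X) → PMF T) :
    (iidPMF P (n + 1)).bind A = (iidPMF P n).bind fun r => P.bind fun a => A (Fin.cons a r) := by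
  rw [iidPMF, PMF.bind_bind]
  simp only [PMF.bind_map]
  exact PMF.bind_comm P (iidPMF P n) fun a r => A (Fin.cons a r)

lemma sum_iidPMF_succ [Fintype X] (P : PMF X) (n : ℕ) (f : (Fin (n + 1) → X) → ℝ) :
    ∑ x, (iidPMF P (n + 1) x).toReal * f x =
      ∑ r, (iidPMF P n r).toReal * ∑ a, (P a).toReal * f (Fin.cons a r) := by
  rw [← (Fin.consEquiv fun _ => X).sum_comp, Fintype.sum_prod_type, Finset.sum_comm]
  simp [Fin.consEquiv, iidPMF_succ_apply, Finset.mul_sum, mul_assoc, mul_left_comm]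

lemma neighbor_cons_left {n : ℕ} (a a' : X) (r : Fin n → X) :
    Neighbor (Fin.cons a r : Fin (n + 1) → X) (Fin.cons a' r) :=
  ⟨0, Fin.cases (fun h => absurd rfl h) fun _ _ => rfl⟩

lemma Neighbor.cons {n : ℕ} {r r' : Fin n → X} (h : Neighbor r r') (a : X) :
    Neighbor (Fin.cons a r : Fin (n + 1) → X) (Fin.cons a r') := by
  obtain ⟨i, hi⟩ := h
  exact ⟨i.succ, Fin.cases (fun _ => rfl) fun j hj => hi j fun h => hj (h ▸ rfl)⟩

lemma DiffPrivate.bind_cons [Fintype X] {n : ℕ} {ε δ : ℝ} {A : (Fin (n + 1) → X) → PMF T}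
    (hA : DiffPrivate A ε δ) (P : PMF X) :
    DiffPrivate (fun r : Fin n → X => P.bind fun a => A (Fin.cons a r)) ε δ :=
  fun _ _ h => ExpDominated.bind P fun a => hA _ _ (h.cons a)

theorem mutualInfoNats_iidPMF_succ_le [Fintype X] (P : PMF X) {n : ℕ}
    (A : (Fin (n + 1) → X) → PMF T) {κ : ℝ}
    (hκ : ∀ r : Fin n → X, ∑ a, (P a).toReal *
      klNats (A (Fin.cons a r)) (P.bind fun a => A (Fin.cons a r)) ≤ κ) :
    mutualInfoNats (jointPMF (iidPMF P (n + 1)) A) ≤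
      κ + mutualInfoNats (jointPMF (iidPMF P n) fun r => P.bind fun a => A (Fin.cons a r)) := by
  set B := fun r : Fin n → X => P.bind fun a => A (Fin.cons a r)
  set μ := iidPMF P n
  have hstep : ∀ r, (μ r).toReal * ∑ a, (P a).toReal * klNats (A (Fin.cons a r)) (μ.bind B) ≤
      (μ r).toReal * κ + (μ r).toReal * klNats (B r) (μ.bind B) := by
    intro r
    rcases (ENNReal.toReal_nonneg (a := μ r)).eq_or_lt with h | h
    · simp [← h]
    rw [sum_mul_klNats_eq_add P _ _ h (μ.mul_toReal_le_toReal_bind B r), mul_add]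
    exact add_le_add_left (mul_le_mul_of_nonneg_left (hκ r) h.le) _
  rw [mutualInfoNats_jointPMF, mutualInfoNats_jointPMF, iidPMF_succ_bind,
    sum_iidPMF_succ P n fun x => klNats (A x) (μ.bind B)]
  calc _ ≤ ∑ r, ((μ r).toReal * κ + (μ r).toReal * klNats (B r) (μ.bind B)) :=
        Finset.sum_le_sum fun r _ => hstep r
    _ = _ := by rw [Finset.sum_add_distrib, ← Finset.sum_mul, μ.sum_toReal, one_mul]

theorem mutualInfoNats_iidPMF_le [Fintype X] (P : PMF X) {ε δ : ℝ} (hε : 0 < ε)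
    (hε2 : ε ≤ 1 / 2) (hδ : 0 ≤ δ) (n : ℕ) (A : (Fin n → X) → PMF T)
    (hA : DiffPrivate A ε δ) :
    mutualInfoNats (jointPMF (iidPMF P n) A) ≤
      n * (32 * ε ^ 2 + 2 * δ + 2 / ε * δ * log (Fintype.card X)) := by
  induction n with
  | zero =>
    have hbind : ∀ x : Fin 0 → X, (iidPMF P 0).bind A = A x := fun x => by
      rw [iidPMF, Subsingleton.elim (fun i : Fin 0 => i.elim0) x, PMF.pure_bind]
    simp [mutualInfoNats_jointPMF, hbind default, klNats_self]
  | succ n ih =>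
    set κ := 32 * ε ^ 2 + 2 * δ + 2 / ε * δ * log (Fintype.card X)
    calc _ ≤ κ + mutualInfoNats (jointPMF (iidPMF P n) fun r => P.bind fun a => A (Fin.cons a r)) :=
          mutualInfoNats_iidPMF_succ_le P A fun r => sum_mul_klNats_bind_le P _ hε hε2 hδ
            fun a b => hA _ _ (neighbor_cons_left a b r)
      _ ≤ κ + n * κ := by gcongr; exact ih _ (hA.bind_cons P)
      _ = (n + 1 : ℕ) * κ := by push_cast; ring

end IID

lemma natCast_mul_bound_le {ε δ : ℝ} (n N : ℕ) (hε : 0 < ε) (hε1 : ε ≤ 1) (hδ : 0 ≤ δ)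
    (hδn : δ ≤ ε / n ^ 2) :
    n * (32 * ε ^ 2 + 2 * δ + 2 / ε * δ * log N) ≤
      32 * (n * ε ^ 2 + n * √(δ / ε) * (1 + log (1 / n * √(ε / δ)) + n * logb 2 N)) := by
  rcases n.eq_zero_or_pos with rfl | hn
  · simp
  have hn1 : (1 : ℝ) ≤ n := by exact_mod_cast hn
  have hδε : δ / ε ≤ 1 :=
    (div_le_one hε).2 (hδn.trans (div_le_self hε.le (one_le_pow₀ hn1)))
  have hs : δ / ε ≤ √(δ / ε) :=
    (le_sqrt (div_nonneg hδ hε.le) (div_nonneg hδ hε.le)).2 (by nlinarith [div_nonneg hδ hε.le])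
  have hδs : δ ≤ √(δ / ε) := (le_div_self hδ hε hε1).trans hs
  have hL : 0 ≤ log (1 / n * √(ε / δ)) := by
    rcases hδ.eq_or_lt with rfl | hδ
    · simp
    refine log_nonneg ?_
    rw [one_div, inv_mul_eq_div, one_le_div (by positivity)]
    refine (le_sqrt (by positivity) (by positivity)).2 ?_
    rw [le_div_iff₀ hδ]
    rw [le_div_iff₀ (by positivity)] at hδn
    linarith
  have hlog : 0 ≤ log N := log_natCast_nonneg N
  have hlogb : log N ≤ n * logb 2 N :=
    (le_div_self hlog (log_pos one_lt_two) (log_two_lt_d9.le.trans (by norm_num))).trans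
      (le_mul_of_one_le_left (by positivity) hn1)
  have key : 2 * δ + 2 / ε * δ * log N ≤
      32 * (√(δ / ε) * (1 + log (1 / n * √(ε / δ)) + n * logb 2 N)) := by
    have h1 := mul_le_mul hs hlogb hlog (sqrt_nonneg _)
    have h2 := mul_nonneg (sqrt_nonneg (δ / ε)) hL
    have h3 := mul_nonneg (sqrt_nonneg (δ / ε)) (hlog.trans hlogb)
    have h4 : 2 / ε * δ * log N = 2 * (δ / ε * log N) := by ring
    nlinarith
  calc n * (32 * ε ^ 2 + 2 * δ + 2 / ε * δ * log N)
      = 32 * (n * ε ^ 2) + n * (2 * δ + 2 / ε * δ * log N) := by ring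
    _ ≤ 32 * (n * ε ^ 2) + n * (32 * (√(δ / ε) * (1 + log (1 / n * √(ε / δ)) + n * logb 2 N))) := by
        gcongr
    _ = _ := by ring

/-- There exist absolute constants `c₁, c₂, C > 0` such that: for every finite
data domain `X`, every `(ε,δ)`-differentially private algorithm `A : X^n → T`, and `X ∼ P^n`,
if `ε ∈ (0,1/2]`, `ε ≥ c₁/√n` and `δ ≤ c₂·ε/n²`, then
`I(X; A(X)) ≤ C·(n·ε² + n·√(δ/ε)·(1 + ln((1/n)·√(ε/δ)) + n·log₂|X|))`. -/
theorem stmt_4 : ∃ c₁ c₂ C : ℝ, 0 < c₁ ∧ 0 < c₂ ∧ 0 < C ∧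
    ∀ (X T : Type) [Fintype X] (n : ℕ) (A : (Fin n → X) → PMF T) (ε δ : ℝ),
      DiffPrivate A ε δ → 0 < ε → ε ≤ 1 / 2 → c₁ / Real.sqrt n ≤ ε →
      0 ≤ δ → δ ≤ c₂ * ε / (n : ℝ) ^ 2 →
      ∀ P : PMF X,
        mutualInfoNats (jointPMF (iidPMF P n) A) ≤
          C * ((n : ℝ) * ε ^ 2 +
            (n : ℝ) * Real.sqrt (δ / ε) *
              (1 + Real.log ((1 / (n : ℝ)) * Real.sqrt (ε / δ)) +
                (n : ℝ) * Real.logb 2 (Fintype.card X))) := by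
  refine ⟨1, 1, 32, one_pos, one_pos, by norm_num, ?_⟩
  intro X T _ n A ε δ hA hε hε2 _ hδ hδn P
  exact (mutualInfoNats_iidPMF_le P hε hε2 hδ n A hA).trans <|
    natCast_mul_bound_le n _ hε (hε2.trans (by norm_num)) hδ (by rwa [one_mul] at hδn)
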